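/- arXiv:1610.04093 — 4 statements merged into one kernel-verified Lean document; each statement's English description precedes it below -/
import Mathlib

section
/- Let f : ℝ → ℝ be a bounded measurable 1-periodic function (f(x+1) = f(x) for all x ≥ 0), let T > 0 and let k ∈ ℕ. Then (k+1) · t^{-(k+1)} · ∫₀^t s^k f(s/T) ds converges to ∫₀^1 f(u) du as t → ∞. -/
/-!
With `h s = f (s / T)` extended periodically beyond `[0, ∞)` and `L = ∫₀¹ f`, the discrepancy
`ρ r = ∫₀^r h - L r` is continuous and `T`-periodic, hence bounded. Integration by parts against
the absolutely continuous `ρ` gives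
`∫₀^t s^k h s ds = L t^(k+1)/(k+1) + t^k ρ t - k ∫₀^t s^(k-1) ρ s ds`,
so the error is `O(t^k)`, which the normalisation `(k+1) t^(-(k+1))` turns into `O(1/t)`.
-/

open MeasureTheory Filter Set

theorem apply_fract_eq_of_add_one_eq {β : Type*} {f : ℝ → β}
    (hf : ∀ x, 0 ≤ x → f (x + 1) = f x) {x : ℝ} (hx : 0 ≤ x) : f (Int.fract x) = f x := by
  have hf_nat : ∀ n : ℕ, ∀ y, 0 ≤ y → f (y + n) = f y := by
    intro n
    induction n with
    | zero => simp
    | succ n ih =>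
      intro y hy
      rw [Nat.cast_succ, ← add_assoc, hf _ (by positivity), ih y hy]
  calc f (Int.fract x) = f (Int.fract x + ⌊x⌋₊) := (hf_nat _ _ (Int.fract_nonneg x)).symm
    _ = f x := by rw [← Int.self_sub_floor, ← Int.natCast_floor_eq_floor hx]; push_cast; ring_nf

theorem intervalIntegral_pow_mul_sub_eq {h : ℝ → ℝ} {t : ℝ}
    (hint : IntervalIntegrable h volume 0 t) (L : ℝ) (k : ℕ) :
    (∫ s in (0:ℝ)..t, s ^ k * h s) - L * t ^ (k + 1) / (k + 1)
      = t ^ k * ((∫ s in (0:ℝ)..t, h s) - L * t)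
        - ∫ r in (0:ℝ)..t, k * r ^ (k - 1) * ((∫ s in (0:ℝ)..r, h s) - L * r) := by
  set ρ : ℝ → ℝ := fun r => (∫ s in (0:ℝ)..r, h s) - L * r
  have hρ_ac : AbsolutelyContinuousOnInterval ρ 0 t :=
    (hint.absolutelyContinuousOnInterval_intervalIntegral left_mem_uIcc).sub
      (contDiffOn_const.mul contDiffOn_id).absolutelyContinuousOnInterval
  have hpow_ac : AbsolutelyContinuousOnInterval (· ^ k : ℝ → ℝ) 0 t :=
    (contDiffOn_id.pow k).absolutelyContinuousOnInterval
  have hρ_deriv : ∀ᵐ s, s ∈ uIoc 0 t → deriv ρ s = h s - L := by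
    filter_upwards [hint.ae_hasDerivAt_integral] with s hs hs_mem
    exact ((hs (uIoc_subset_uIcc hs_mem) 0 left_mem_uIcc).sub
      ((hasDerivAt_id s).const_mul L)).deriv.trans (by rw [mul_one])
  have hρ0 : ρ 0 = 0 := by simp [ρ]
  have hIBP := hpow_ac.integral_mul_deriv_eq_deriv_mul hρ_ac
  rw [hρ0, mul_zero, sub_zero, intervalIntegral.integral_congr_ae
    (hρ_deriv.mono fun s hs hs_mem => by rw [hs hs_mem])] at hIBP
  simp only [deriv_pow_field] at hIBP
  rw [← hIBP]
  simp_rw [mul_sub]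
  rw [intervalIntegral.integral_sub (hint.continuousOn_mul (continuousOn_pow k))
    ((by fun_prop : Continuous fun s : ℝ => s ^ k * L).intervalIntegrable 0 t),
    intervalIntegral.integral_mul_const, integral_pow]
  ring

theorem abs_intervalIntegral_pow_mul_sub_le {h : ℝ → ℝ} {t L M : ℝ} (ht : 0 ≤ t)
    (hint : IntervalIntegrable h volume 0 t)
    (hM : ∀ r ∈ Icc 0 t, |(∫ s in (0:ℝ)..r, h s) - L * r| ≤ M) (k : ℕ) :
    |(∫ s in (0:ℝ)..t, s ^ k * h s) - L * t ^ (k + 1) / (k + 1)| ≤ (k + 1) * M * t ^ k := by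
  have hρ_bound : ∀ r ∈ uIoc 0 t,
      ‖k * r ^ (k - 1) * ((∫ s in (0:ℝ)..r, h s) - L * r)‖ ≤ k * t ^ (k - 1) * M := by
    intro r hr
    rw [uIoc_of_le ht] at hr
    rw [norm_mul, norm_mul, Real.norm_natCast, norm_pow, Real.norm_of_nonneg hr.1.le]
    gcongr
    exacts [hr.1.le, hr.2, (Real.norm_eq_abs _).trans_le (hM r (Ioc_subset_Icc_self hr))]
  have hρ_integral := intervalIntegral.norm_integral_le_of_norm_le_const hρ_bound
  rw [Real.norm_eq_abs, sub_zero, abs_of_nonneg ht] at hρ_integral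
  have hρt : |t ^ k * ((∫ s in (0:ℝ)..t, h s) - L * t)| ≤ t ^ k * M := by
    rw [abs_mul, abs_of_nonneg (by positivity)]
    exact mul_le_mul_of_nonneg_left (hM t (right_mem_Icc.2 ht)) (by positivity)
  have hpow : (k : ℝ) * t ^ (k - 1) * t = k * t ^ k := by
    cases k <;> simp [pow_succ, mul_assoc]
  rw [intervalIntegral_pow_mul_sub_eq hint]
  calc _ ≤ _ := abs_sub _ _
    _ ≤ t ^ k * M + k * t ^ (k - 1) * M * t := add_le_add hρt hρ_integral
    _ = (k + 1) * M * t ^ k := by linear_combination M * hpow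

theorem tendsto_weighted_intervalIntegral_of_abs_sub_le {h : ℝ → ℝ}
    (hint : ∀ t, IntervalIntegrable h volume 0 t) {L M : ℝ}
    (hM : ∀ t, 0 ≤ t → |(∫ s in (0:ℝ)..t, h s) - L * t| ≤ M) (k : ℕ) :
    Tendsto (fun t : ℝ => ((k : ℝ) + 1) * t ^ (-((k : ℤ) + 1)) * ∫ s in (0:ℝ)..t, s ^ k * h s)
      atTop (nhds L) := by
  refine tendsto_sub_nhds_zero_iff.1 (squeeze_zero_norm' ?_
    (tendsto_const_nhds.div_atTop tendsto_id : Tendsto (fun t => ((k : ℝ) + 1) ^ 2 * M / t) _ _))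
  filter_upwards [eventually_gt_atTop 0] with t ht
  have hI := abs_intervalIntegral_pow_mul_sub_le ht.le (hint t) (fun r hr => hM r hr.1) k
  have hzpow : t ^ (-((k : ℤ) + 1)) = (t ^ (k + 1))⁻¹ := by
    rw [← zpow_natCast, ← zpow_neg]; push_cast; rfl
  calc ‖((k : ℝ) + 1) * t ^ (-((k : ℤ) + 1)) * (∫ s in (0:ℝ)..t, s ^ k * h s) - L‖
      = (k + 1) / t ^ (k + 1) * |(∫ s in (0:ℝ)..t, s ^ k * h s) - L * t ^ (k + 1) / (k + 1)| := by
        rw [Real.norm_eq_abs, hzpow, ← abs_of_pos (by positivity : (0:ℝ) < (k + 1) / t ^ (k + 1)),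
          ← abs_mul]
        congr 1
        field_simp
    _ ≤ (k + 1) / t ^ (k + 1) * ((k + 1) * M * t ^ k) := by gcongr
    _ = (k + 1) ^ 2 * M / t := by
        field_simp
        ring

theorem Function.Periodic.exists_abs_intervalIntegral_sub_le {h : ℝ → ℝ} {T : ℝ}
    (hh : Function.Periodic h T) (hT : T ≠ 0) (hint : IntervalIntegrable h volume 0 T) :
    ∃ M, ∀ t, |(∫ s in (0:ℝ)..t, h s) - (∫ s in (0:ℝ)..T, h s) / T * t| ≤ M := by
  have hint' := hh.intervalIntegrable₀ hT hint
  set ρ : ℝ → ℝ := fun t => (∫ s in (0:ℝ)..t, h s) - (∫ s in (0:ℝ)..T, h s) / T * t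
  have hρ_cont : Continuous ρ :=
    (intervalIntegral.continuous_primitive hint' 0).sub (continuous_const.mul continuous_id)
  have hρ_per : Function.Periodic ρ T := fun t => by
    simp only [ρ]
    rw [hh.intervalIntegral_add_eq_add 0 t hint', zero_add]
    field_simp
    ring
  obtain ⟨M, hM⟩ := isBounded_iff_forall_norm_le.1 (hρ_per.isBounded_of_continuous hT hρ_cont)
  exact ⟨M, fun t => hM _ (mem_range_self t)⟩

/-- Deterministic core of the ergodic Lemma (σ ≡ 1): for a bounded measurable
1-periodic function `f`, `(k+1) t^{-(k+1)} ∫₀^t s^k f(s/T) ds → ∫₀^1 f(u) du` as `t → ∞`. -/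
theorem periodic_weighted_average_tendsto
    (f : ℝ → ℝ) (hf_meas : Measurable f)
    (hf_bdd : ∃ C : ℝ, ∀ x : ℝ, |f x| ≤ C)
    (hf_per : ∀ x : ℝ, 0 ≤ x → f (x + 1) = f x)
    (T : ℝ) (hT : 0 < T) (k : ℕ) :
    Tendsto
      (fun t : ℝ =>
        ((k : ℝ) + 1) * t ^ (-((k : ℤ) + 1)) * ∫ s in (0:ℝ)..t, s ^ k * f (s / T))
      atTop (nhds (∫ u in (0:ℝ)..1, f u)) := by
  obtain ⟨C, hC⟩ := hf_bdd
  set g : ℝ → ℝ := fun s => f (Int.fract (s / T))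
  have hg_per : Function.Periodic g T := by
    have h_fract : Function.Periodic (f ∘ Int.fract) 1 := fun x => by simp [Int.fract_add_one]
    simpa using h_fract.div_const T
  have hg_int : ∀ a b, IntervalIntegrable g volume a b := fun a b =>
    (intervalIntegrable_const (c := C)).mono_fun'
      (hf_meas.comp (measurable_fract.comp (measurable_id.div_const T))).aestronglyMeasurable
      (ae_of_all _ fun s => hC _)
  have hg_mean : (∫ s in (0:ℝ)..T, g s) / T = ∫ u in (0:ℝ)..1, f u := by
    rw [intervalIntegral.integral_comp_div (fun u => f (Int.fract u)) hT.ne', zero_div,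
      div_self hT.ne', smul_eq_mul, mul_div_cancel_left₀ _ hT.ne']
    refine intervalIntegral.integral_congr fun u hu => ?_
    rw [uIcc_of_le zero_le_one] at hu
    exact apply_fract_eq_of_add_one_eq hf_per hu.1
  obtain ⟨M, hM⟩ := hg_per.exists_abs_intervalIntegral_sub_le hT.ne' (hg_int 0 T)
  rw [hg_mean] at hM
  refine (tendsto_weighted_intervalIntegral_of_abs_sub_le (fun t => hg_int 0 t)
    (fun t _ => hM t) k).congr' ?_
  filter_upwards [eventually_ge_atTop 0] with t ht
  congr 1
  refine intervalIntegral.integral_congr fun s hs => ?_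
  rw [uIcc_of_le ht] at hs
  simp only [g, apply_fract_eq_of_add_one_eq hf_per (div_nonneg hs.1 hT.le)]
end

section
/- Let g : ℝ → ℝ be twice continuously differentiable and 1-periodic, let T > 0, t > 0, let (h_n) be a bounded real sequence, and set T_n := T + h_n · n^{-3/2}. Then ∫₀^{tn} ( g(s/T_n) − g(s/T) + (T_n − T) · (s/T²) · g'(s/T) )² ds → 0 as n → ∞. -/
/-!
Write `φ(τ) = g (s / τ)`. The integrand is the square of the first-order Taylor remainder
`φ(T_n) - φ(T) - (T_n - T) φ'(T)`, and `φ''(τ) = g''(s/τ) s²/τ⁴ + 2 g'(s/τ) s/τ³`. Since `g'` and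
`g''` are continuous and periodic they are bounded, so for `τ ≥ T/2` and `0 ≤ s ≤ tn` the remainder
is `O(n² (T_n - T)²) = O(1/n)`. Squaring and integrating over an interval of length `tn` leaves
`O(1/n)`.
-/

open MeasureTheory Filter Set

theorem Function.Periodic.deriv {𝕜 F : Type*} [NontriviallyNormedField 𝕜] [NormedAddCommGroup F]
    [NormedSpace 𝕜 F] {f : 𝕜 → F} {c : 𝕜} (hf : f.Periodic c) : (_root_.deriv f).Periodic c :=
  fun x => by rw [← deriv_comp_add_const, funext hf]

theorem ContDiff.exists_bound_deriv_of_periodic {g : ℝ → ℝ} (hg : ContDiff ℝ 2 g) {c : ℝ}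
    (hper : g.Periodic c) (hc : c ≠ 0) :
    ∃ M, ∀ x, |deriv g x| ≤ M ∧ |deriv (deriv g) x| ≤ M := by
  have bound {f : ℝ → ℝ} (hf : Continuous f) (hp : f.Periodic c) : ∃ M, ∀ x, |f x| ≤ M := by
    obtain ⟨M, hM⟩ := isBounded_iff_forall_norm_le.mp (hp.isBounded_of_continuous hc hf)
    exact ⟨M, fun x => hM _ (mem_range_self x)⟩
  obtain ⟨M₁, hM₁⟩ := bound (hg.continuous_deriv one_le_two) hper.deriv
  obtain ⟨M₂, hM₂⟩ := bound ((ContDiff.iterate_deriv' 0 2 hg).continuous) hper.deriv.deriv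
  exact ⟨max M₁ M₂, fun x =>
    ⟨(hM₁ x).trans (le_max_left _ _), (hM₂ x).trans (le_max_right _ _)⟩⟩

theorem hasDerivAt_const_div {s u : ℝ} (hu : u ≠ 0) :
    HasDerivAt (fun v => s / v) (-s / u ^ 2) u := by
  simpa only [div_eq_mul_inv, mul_neg, neg_mul] using (hasDerivAt_inv hu).const_mul s

theorem hasDerivAt_neg_const_div_sq {s u : ℝ} (hu : u ≠ 0) :
    HasDerivAt (fun v => -s / v ^ 2) (2 * s / u ^ 3) u := by
  have := ((hasDerivAt_pow 2 u).inv (pow_ne_zero 2 hu)).const_mul (-s)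
  refine (this.congr_deriv ?_).congr_of_eventuallyEq (.of_forall fun v => div_eq_mul_inv _ _)
  field_simp
  ring

theorem abs_sub_sub_mul_le_of_abs_deriv2_le {f f' f'' : ℝ → ℝ} {D : Set ℝ} (hD : Convex ℝ D)
    {M x y : ℝ} (hf : ∀ z ∈ D, HasDerivAt f (f' z) z) (hf' : ∀ z ∈ D, HasDerivAt f' (f'' z) z)
    (hM : ∀ z ∈ D, |f'' z| ≤ M) (hx : x ∈ D) (hy : y ∈ D) :
    |f y - f x - f' x * (y - x)| ≤ M * (y - x) ^ 2 := by
  have hf'_lip : ∀ z ∈ D, |f' z - f' x| ≤ M * |z - x| := fun z hz => by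
    simpa only [Real.norm_eq_abs] using hD.norm_image_sub_le_of_norm_hasDerivWithin_le
      (fun w hw => (hf' w hw).hasDerivWithinAt) (fun w hw => hM w hw) hx hz
  have hxy : uIcc x y ⊆ D := hD.ordConnected.uIcc_subset hx hy
  have := (convex_uIcc x y).norm_image_sub_le_of_norm_hasDerivWithin_le
    (f := fun z => f z - f' x * z) (f' := fun z => f' z - f' x)
    (fun z hz => ((hf z (hxy hz)).sub ((hasDerivAt_id z).const_mul (f' x))).hasDerivWithinAt
      |>.congr_deriv (by simp))
    (fun z hz => (hf'_lip z (hxy hz)).trans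
      (mul_le_mul_of_nonneg_left (abs_sub_left_of_mem_uIcc hz) ((abs_nonneg _).trans (hM x hx))))
    left_mem_uIcc right_mem_uIcc
  calc |f y - f x - f' x * (y - x)| = ‖f y - f' x * y - (f x - f' x * x)‖ := by
        rw [Real.norm_eq_abs]; ring_nf
    _ ≤ M * |y - x| * ‖y - x‖ := this
    _ = M * (y - x) ^ 2 := by rw [Real.norm_eq_abs, mul_assoc, ← sq, sq_abs]

noncomputable def divTaylorRemainder (g : ℝ → ℝ) (T τ s : ℝ) : ℝ :=
  g (s / τ) - g (s / T) + (τ - T) * (s / T ^ 2) * deriv g (s / T)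

theorem abs_divTaylorRemainder_le {g : ℝ → ℝ} (hg : ContDiff ℝ 2 g) {M : ℝ}
    (hM : ∀ x, |deriv g x| ≤ M ∧ |deriv (deriv g) x| ≤ M) {a T τ s S : ℝ} (ha : 0 < a)
    (hT : a ≤ T) (hτ : a ≤ τ) (hs₀ : 0 ≤ s) (hs : s ≤ S) :
    |divTaylorRemainder g T τ s|
      ≤ M * ((S / a ^ 2) ^ 2 + 2 * S / a ^ 3) * (τ - T) ^ 2 := by
  have hg₁ : Differentiable ℝ g := hg.differentiable two_ne_zero
  have hg₂ : Differentiable ℝ (deriv g) :=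
    (contDiff_succ_iff_deriv.mp hg).2.2.differentiable one_ne_zero
  have hpos : ∀ v ∈ Ici a, v ≠ 0 := fun v hv => (ha.trans_le hv).ne'
  have hbound : ∀ v ∈ Ici a, |deriv (deriv g) (s / v) * (-s / v ^ 2) * (-s / v ^ 2)
      + deriv g (s / v) * (2 * s / v ^ 3)| ≤ M * ((S / a ^ 2) ^ 2 + 2 * S / a ^ 3) := by
    intro v (hv : a ≤ v)
    have hv₀ : 0 < v := ha.trans_le hv
    have hS₀ : 0 ≤ S := hs₀.trans hs
    have h₂ : s / v ^ 2 ≤ S / a ^ 2 := by gcongr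
    have h₃ : 2 * s / v ^ 3 ≤ 2 * S / a ^ 3 := by gcongr
    calc _ ≤ |deriv (deriv g) (s / v)| * (s / v ^ 2) ^ 2
            + |deriv g (s / v)| * (2 * s / v ^ 3) := by
          refine (abs_add_le _ _).trans_eq ?_
          rw [abs_mul, abs_mul, abs_mul, abs_of_nonneg (by positivity : 0 ≤ 2 * s / v ^ 3),
            neg_div, abs_neg, abs_of_nonneg (by positivity : 0 ≤ s / v ^ 2)]
          ring
      _ ≤ M * (S / a ^ 2) ^ 2 + M * (2 * S / a ^ 3) := by
          have hM₀ : 0 ≤ M := (abs_nonneg _).trans (hM 0).1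
          gcongr
          exacts [(hM _).2, (hM _).1]
      _ = _ := by ring
  have := abs_sub_sub_mul_le_of_abs_deriv2_le (convex_Ici a)
    (fun v hv => (hg₁ _).hasDerivAt.comp v (hasDerivAt_const_div (hpos v hv)))
    (fun v hv => ((hg₂ _).hasDerivAt.comp v (hasDerivAt_const_div (hpos v hv))).mul
      (hasDerivAt_neg_const_div_sq (hpos v hv)))
    hbound (show a ≤ T from hT) (show a ≤ τ from hτ)
  convert this using 2
  simp only [divTaylorRemainder, Function.comp]
  ring

theorem norm_integral_divTaylorRemainder_sq_le {g : ℝ → ℝ} (hg : ContDiff ℝ 2 g) {M : ℝ}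
    (hM : ∀ x, |deriv g x| ≤ M ∧ |deriv (deriv g) x| ≤ M) {a T τ t n : ℝ} (ha : 0 < a)
    (hT : a ≤ T) (hτ : a ≤ τ) (ht : 0 ≤ t) (hn : 1 ≤ n) :
    ‖∫ s in (0:ℝ)..(t * n), divTaylorRemainder g T τ s ^ 2‖
      ≤ (M * ((t / a ^ 2) ^ 2 + 2 * t / a ^ 3) * (n ^ 2 * (τ - T) ^ 2)) ^ 2 * (t * n) := by
  have hM₀ : 0 ≤ M := (abs_nonneg _).trans (hM 0).1
  have htn : 0 ≤ t * n := mul_nonneg ht (zero_le_one.trans hn)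
  have hpoint : ∀ s ∈ uIoc 0 (t * n), ‖divTaylorRemainder g T τ s ^ 2‖
      ≤ (M * ((t / a ^ 2) ^ 2 + 2 * t / a ^ 3) * (n ^ 2 * (τ - T) ^ 2)) ^ 2 := by
    intro s hs
    obtain ⟨hs₀, hs⟩ := uIoc_of_le htn ▸ hs
    rw [norm_pow, Real.norm_eq_abs]
    gcongr
    calc _ ≤ M * ((t * n / a ^ 2) ^ 2 + 2 * (t * n) / a ^ 3) * (τ - T) ^ 2 :=
          abs_divTaylorRemainder_le hg hM ha hT hτ hs₀.le hs
      _ = M * ((t / a ^ 2) ^ 2 * n ^ 2 + 2 * t / a ^ 3 * n) * (τ - T) ^ 2 := by ring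
      _ ≤ M * ((t / a ^ 2) ^ 2 * n ^ 2 + 2 * t / a ^ 3 * n ^ 2) * (τ - T) ^ 2 := by
          gcongr
          exact le_self_pow₀ hn two_ne_zero
      _ = _ := by ring
  simpa [abs_of_nonneg htn] using intervalIntegral.norm_integral_le_of_norm_le_const hpoint

theorem sq_mul_sq_mul_rpow_neg_three_halves_le {x y C : ℝ} (hx : 0 ≤ x) (hy : |y| ≤ C) :
    x ^ 2 * (y * x ^ (-(3 / 2) : ℝ)) ^ 2 ≤ C ^ 2 / x := by
  have hpow : x ^ 2 * (x ^ (-(3 / 2) : ℝ)) ^ 2 = x⁻¹ := by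
    rw [← Real.rpow_natCast, ← Real.rpow_natCast, ← Real.rpow_mul hx,
      ← Real.rpow_add' hx (by norm_num)]
    norm_num [Real.rpow_neg_one]
  rw [mul_pow, mul_left_comm, hpow, ← div_eq_mul_inv]
  exact div_le_div_of_nonneg_right (sq_le_sq' (abs_le.mp hy).1 (abs_le.mp hy).2) hx

/-- Convergence of the remainder term `C_n` in the proof of the LAN theorem:
the squared second-order Taylor error of `T ↦ g(s/T)` at the local scale
`n^{-3/2}`, integrated over `[0, tn]`, vanishes as `n → ∞`. -/
theorem remainder_Cn_tendsto_zero
    (g : ℝ → ℝ) (hg : ContDiff ℝ 2 g) (hper : Function.Periodic g 1)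
    (T t : ℝ) (hT : 0 < T) (ht : 0 < t)
    (h : ℕ → ℝ) (hbdd : ∃ C : ℝ, ∀ n, |h n| ≤ C)
    (Tn : ℕ → ℝ) (hTn : ∀ n, Tn n = T + h n * (n : ℝ) ^ (-(3 / 2) : ℝ)) :
    Tendsto
      (fun n : ℕ =>
        ∫ s in (0:ℝ)..(t * n),
          (g (s / Tn n) - g (s / T) + (Tn n - T) * (s / T ^ 2) * deriv g (s / T)) ^ 2)
      atTop (nhds 0) := by
  obtain ⟨C, hC⟩ := hbdd
  obtain ⟨M, hM⟩ := hg.exists_bound_deriv_of_periodic hper one_ne_zero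
  have hM₀ : 0 ≤ M := (abs_nonneg _).trans (hM 0).1
  set K := M * ((t / (T / 2) ^ 2) ^ 2 + 2 * t / (T / 2) ^ 3)
  have hTn_lim : Tendsto Tn atTop (nhds T) := by
    have := isBoundedUnder_le_mul_tendsto_zero (isBoundedUnder_of ⟨C, hC⟩)
      ((tendsto_rpow_neg_atTop (by norm_num : (0:ℝ) < 3 / 2)).comp tendsto_natCast_atTop_atTop)
    rw [funext hTn]
    simpa using this.const_add T
  refine squeeze_zero_norm' ?_ (tendsto_const_div_atTop_nhds_zero_nat ((K * C ^ 2) ^ 2 * t))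
  filter_upwards [hTn_lim.eventually_const_le (half_lt_self hT), eventually_ge_atTop 1]
    with n hTn_ge hn
  have hscale : (n : ℝ) ^ 2 * (Tn n - T) ^ 2 ≤ C ^ 2 / n := by
    rw [hTn, add_sub_cancel_left]
    exact sq_mul_sq_mul_rpow_neg_three_halves_le n.cast_nonneg (hC n)
  calc _ ≤ (K * (n ^ 2 * (Tn n - T) ^ 2)) ^ 2 * (t * n) :=
        norm_integral_divTaylorRemainder_sq_le hg hM (half_pos hT) (half_le_self hT.le) hTn_ge
          ht.le (by exact_mod_cast hn)
    _ ≤ (K * (C ^ 2 / n)) ^ 2 * (t * n) := by gcongr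
    _ = (K * C ^ 2) ^ 2 * t / n := by field_simp
end

section
/- Let δ ∈ (0,1], ζ ≥ 0, c ≥ 0 and let f : [0,∞) → ℝ^d satisfy the Hölder growth condition: for every t > 0 and all s, s̃ ∈ [0,t], |f(s) − f(s̃)| ≤ c · t^ζ · |s − s̃|^δ. Let T > ε > 0. Then for every T̃ ∈ (T − ε, T + ε) and every t > 0: ∫₀^t |f(s/T̃) − f(s/T)|² ds ≤ c² · (t/(T−ε))^{2ζ} · (|T̃ − T|/(T−ε)²)^{2δ} · t^{2δ+1}/(2δ+1). -/
open MeasureTheory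

/-- A pointwise Hölder-`δ` condition (with constant growing like `t^ζ`) implies the
`L²`-Hölder bound of the paper's Remark, part 2. -/
theorem l2_holder_of_pointwise_holder
    (d : ℕ) (δ ζ c : ℝ) (hδ : δ ∈ Set.Ioc (0:ℝ) 1) (hζ : 0 ≤ ζ) (hc : 0 ≤ c)
    (f : ℝ → EuclideanSpace ℝ (Fin d))
    (hf : ∀ t > (0:ℝ), ∀ s ∈ Set.Icc (0:ℝ) t, ∀ s' ∈ Set.Icc (0:ℝ) t,
      ‖f s - f s'‖ ≤ c * t ^ ζ * |s - s'| ^ δ)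
    (T ε : ℝ) (hε : 0 < ε) (hεT : ε < T)
    (T' : ℝ) (hT' : T' ∈ Set.Ioo (T - ε) (T + ε)) (t : ℝ) (ht : 0 < t) :
    ∫ s in (0:ℝ)..t, ‖f (s / T') - f (s / T)‖ ^ 2 ≤
      c ^ 2 * (t / (T - ε)) ^ (2 * ζ) * (|T' - T| / (T - ε) ^ 2) ^ (2 * δ) *
        t ^ (2 * δ + 1) / (2 * δ + 1) := by
  obtain ⟨hδ0, hδ1⟩ := hδ
  set E := T - ε with hE
  have hE0 : 0 < E := by simp [hE]; linarith
  have hT0 : 0 < T := by linarith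
  have hT'0 : 0 < T' := lt_of_lt_of_le hE0 hT'.1.le
  set C : ℝ := c * (t / E) ^ ζ * (|T' - T| / E ^ 2) ^ δ with hC
  have hC0 : 0 ≤ C := by positivity
  have hkey : ∀ s ∈ Set.Icc (0:ℝ) t,
      ‖f (s / T') - f (s / T)‖ ^ 2 ≤ C ^ 2 * s ^ (2 * δ) := by
    intro s hs
    have hs0 : 0 ≤ s := hs.1
    have hst : s ≤ t := hs.2
    have ht0 : 0 < t / E := div_pos ht hE0
    have hmem : ∀ R : ℝ, E ≤ R → 0 < R → s / R ∈ Set.Icc (0:ℝ) (t / E) := by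
      intro R hR hR0
      constructor
      · positivity
      · exact div_le_div₀ ht.le hst hE0 hR
    have h1 := hf (t / E) ht0 (s / T') (hmem T' hT'.1.le hT'0)
      (s / T) (hmem T (by rw [hE]; linarith) hT0)
    have hdist : |s / T' - s / T| ≤ s * |T' - T| / E ^ 2 := by
      have : s / T' - s / T = s * (T - T') / (T' * T) := by
        field_simp
      rw [this, abs_div, abs_mul, abs_of_nonneg hs0,
        abs_of_pos (mul_pos hT'0 hT0)]
      rw [div_le_div_iff₀ (mul_pos hT'0 hT0) (by positivity)]
      have h2 : |T - T'| = |T' - T| := abs_sub_comm _ _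
      rw [h2]
      have hTT' : E ^ 2 ≤ T' * T := by
        have : E ≤ T' := hT'.1.le
        have : E ≤ T := by linarith
        nlinarith [hT'.1.le]
      nlinarith [abs_nonneg (T' - T), mul_nonneg hs0 (abs_nonneg (T' - T))]
    have hnorm : ‖f (s / T') - f (s / T)‖ ≤ C * s ^ δ := by
      refine h1.trans ?_
      have h3 : |s / T' - s / T| ^ δ ≤ (s * |T' - T| / E ^ 2) ^ δ :=
        Real.rpow_le_rpow (abs_nonneg _) hdist hδ0.le
      have h4 : (s * |T' - T| / E ^ 2) ^ δ = s ^ δ * (|T' - T| / E ^ 2) ^ δ := by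
        rw [mul_div_assoc, Real.mul_rpow hs0 (by positivity)]
      calc c * (t / E) ^ ζ * |s / T' - s / T| ^ δ
          ≤ c * (t / E) ^ ζ * (s * |T' - T| / E ^ 2) ^ δ := by
            apply mul_le_mul_of_nonneg_left h3 (by positivity)
        _ = C * s ^ δ := by rw [h4, hC]; ring
    have hsq := pow_le_pow_left₀ (norm_nonneg _) hnorm 2
    refine hsq.trans_eq ?_
    rw [mul_pow]
    congr 1
    rw [← Real.rpow_natCast (s ^ δ) 2, ← Real.rpow_mul hs0]
    norm_num [mul_comm]
  have hRHS : C ^ 2 * (t ^ (2 * δ + 1) / (2 * δ + 1)) =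
      c ^ 2 * (t / E) ^ (2 * ζ) * (|T' - T| / E ^ 2) ^ (2 * δ) *
        t ^ (2 * δ + 1) / (2 * δ + 1) := by
    have e1 : ((t / E) ^ ζ) ^ 2 = (t / E) ^ (2 * ζ) := by
      rw [← Real.rpow_natCast ((t / E) ^ ζ) 2, ← Real.rpow_mul (by positivity)]
      norm_num [mul_comm]
    have e2 : ((|T' - T| / E ^ 2) ^ δ) ^ 2 = (|T' - T| / E ^ 2) ^ (2 * δ) := by
      rw [← Real.rpow_natCast ((|T' - T| / E ^ 2) ^ δ) 2,
        ← Real.rpow_mul (by positivity)]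
      norm_num [mul_comm]
    rw [hC, mul_pow, mul_pow, e1, e2]; ring
  by_cases hint : IntervalIntegrable (fun s => ‖f (s / T') - f (s / T)‖ ^ 2)
      volume 0 t
  · have hint' : IntervalIntegrable (fun s : ℝ => C ^ 2 * s ^ (2 * δ))
        volume 0 t := by
      apply IntervalIntegrable.const_mul
      apply intervalIntegral.intervalIntegrable_rpow (Or.inl (by linarith))
    have hmono := intervalIntegral.integral_mono_on ht.le hint hint' hkey
    refine hmono.trans ?_
    rw [intervalIntegral.integral_const_mul,
      integral_rpow (Or.inl (by linarith : (-1:ℝ) < 2 * δ))]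
    rw [Real.zero_rpow (by linarith : 2 * δ + 1 ≠ 0)]
    rw [sub_zero, ← hRHS]
  · rw [intervalIntegral.integral_undef hint, ← hRHS]
    positivity
end

section
/- Let δ ∈ (0,1], ζ ∈ [0, δ/2), c ≥ 0 and let f : [0,∞) → ℝ^d satisfy: for every t > 0 and all s, s̃ ∈ [0,t], |f(s) − f(s̃)| ≤ c · t^ζ · |s − s̃|^δ. Let T > 0, t > 0, let (h_n) be a bounded real sequence, and set T_n := T + h_n · n^{-3/2}. Then n^{-1} ∫₀^{tn} | f(s/T_n) − f(s/T) |² ds → 0 as n → ∞. -/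
open MeasureTheory Filter Real Set Topology

/-! For `s ∈ [0, tn]` both `s / T` and `s / T_n` lie in `[0, 2tn/T]` once `|T_n - T| ≤ T/2`, and
they differ by at most `2tn |T_n - T| / T² = O(n^{-1/2})`. The Hölder condition on `[0, 2tn/T]`
therefore bounds the integrand by `(c (2tn/T)^ζ O(n^{-1/2})^δ)² = O(n^{2ζ-δ})`, so the normalised
integral is `O(n^{2ζ-δ})`, which tends to `0` because `ζ < δ/2`. -/

section HolderDilation

variable {E : Type*} [SeminormedAddCommGroup E] {f : ℝ → E} {c ζ δ : ℝ} (hc : 0 ≤ c)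
  (hδ : 0 ≤ δ)
  (hf : ∀ L > (0:ℝ), ∀ x ∈ Icc 0 L, ∀ y ∈ Icc 0 L, ‖f x - f y‖ ≤ c * L ^ ζ * |x - y| ^ δ)
include hc hδ hf

lemma norm_comp_div_sub_comp_div_le {T T' ε R s : ℝ} (hT : 0 < T) (hε : |T' - T| ≤ ε)
    (hεT : ε ≤ T / 2) (hR : 0 < R) (hs : s ∈ Icc 0 R) :
    ‖f (s / T') - f (s / T)‖ ≤ c * (2 * R / T) ^ ζ * (2 * R * ε / T ^ 2) ^ δ := by
  obtain ⟨hs0, hsR⟩ := hs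
  have hε0 : 0 ≤ ε := (abs_nonneg _).trans hε
  have hT' : T / 2 ≤ T' := by linarith [(abs_le.1 hε).1]
  have hmem : ∀ T'' ≥ T / 2, s / T'' ∈ Icc 0 (2 * R / T) := fun T'' hT'' =>
    ⟨div_nonneg hs0 (by linarith),
      (div_le_div₀ hR.le hsR (by positivity) hT'').trans_eq (by ring)⟩
  have hdist : |s / T' - s / T| ≤ 2 * R * ε / T ^ 2 := calc
    |s / T' - s / T| = s * |T' - T| / (T' * T) := by
      have hT'0 : 0 < T' := by linarith
      rw [show s / T' - s / T = s * (T - T') / (T' * T) by field_simp, abs_div, abs_mul,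
        abs_of_nonneg hs0, abs_sub_comm, abs_of_pos (mul_pos hT'0 hT)]
    _ ≤ R * ε / (T / 2 * T) := by gcongr
    _ = 2 * R * ε / T ^ 2 := by field_simp
  calc ‖f (s / T') - f (s / T)‖
      ≤ c * (2 * R / T) ^ ζ * |s / T' - s / T| ^ δ :=
        hf _ (by positivity) _ (hmem T' hT') _ (hmem T (by linarith))
    _ ≤ c * (2 * R / T) ^ ζ * (2 * R * ε / T ^ 2) ^ δ := by gcongr

lemma inv_mul_integral_sq_norm_comp_div_sub_le {T T' ε t n : ℝ} (hT : 0 < T)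
    (hε : |T' - T| ≤ ε) (hεT : ε ≤ T / 2) (ht : 0 < t) (hn : 0 < n) :
    n⁻¹ * ∫ s in (0:ℝ)..(t * n), ‖f (s / T') - f (s / T)‖ ^ 2
      ≤ t * (c * (2 * (t * n) / T) ^ ζ * (2 * (t * n) * ε / T ^ 2) ^ δ) ^ 2 := by
  set B := c * (2 * (t * n) / T) ^ ζ * (2 * (t * n) * ε / T ^ 2) ^ δ
  have htn : 0 < t * n := by positivity
  have hpt : ∀ s ∈ uIoc 0 (t * n), ‖‖f (s / T') - f (s / T)‖ ^ 2‖ ≤ B ^ 2 := by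
    intro s hs
    rw [uIoc_of_le htn.le] at hs
    rw [norm_pow, norm_norm]
    exact pow_le_pow_left₀ (norm_nonneg _)
      (norm_comp_div_sub_comp_div_le hc hδ hf hT hε hεT htn ⟨hs.1.le, hs.2⟩) 2
  calc n⁻¹ * ∫ s in (0:ℝ)..(t * n), ‖f (s / T') - f (s / T)‖ ^ 2
      ≤ n⁻¹ * (B ^ 2 * |t * n - 0|) := by
        gcongr
        exact (le_abs_self _).trans (intervalIntegral.norm_integral_le_of_norm_le_const hpt)
    _ = t * B ^ 2 := by
        rw [sub_zero, abs_of_pos htn]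
        field_simp

end HolderDilation

lemma tendsto_mul_rpow_mul_mul_rpow_neg_three_halves_atTop (a b c ζ δ : ℝ)
    (ha : 0 ≤ a) (hb : 0 ≤ b) (hζδ : ζ < δ / 2) :
    Tendsto (fun x : ℝ => c * (a * x) ^ ζ * (b * x * x ^ (-(3 / 2) : ℝ)) ^ δ) atTop (𝓝 0) := by
  have hpow : Tendsto (fun x : ℝ => x ^ (ζ - δ / 2)) atTop (𝓝 0) := by
    simpa using tendsto_rpow_neg_atTop (y := δ / 2 - ζ) (by linarith)
  have := hpow.const_mul (c * a ^ ζ * b ^ δ)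
  rw [mul_zero] at this
  refine this.congr' ?_
  filter_upwards [eventually_gt_atTop 0] with x hx
  rw [mul_assoc b, mul_rpow ha hx.le, mul_rpow hb (by positivity),
    ← rpow_one_add' hx.le (by norm_num), ← rpow_mul hx.le, rpow_sub hx,
    show (1 + -(3 / 2) : ℝ) * δ = -(δ / 2) by ring, rpow_neg hx.le]
  ring

/-- Convergence of the term `B_n` in the proof of the LAN theorem, when the Hölder
condition (S6) arises from a pointwise Hölder property of the θ-gradient of the signal:
with `T_n = T + h_n n^{-3/2}` and `ζ < δ/2`, `n⁻¹ ∫₀^{tn} |f(s/T_n) − f(s/T)|² ds → 0`. -/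
theorem remainder_Bn_tendsto_zero
    (d : ℕ) (δ ζ c : ℝ) (hδ : δ ∈ Set.Ioc (0:ℝ) 1) (hζ : ζ ∈ Set.Ico (0:ℝ) (δ / 2))
    (hc : 0 ≤ c)
    (f : ℝ → EuclideanSpace ℝ (Fin d))
    (hf : ∀ t > (0:ℝ), ∀ s ∈ Set.Icc (0:ℝ) t, ∀ s' ∈ Set.Icc (0:ℝ) t,
      ‖f s - f s'‖ ≤ c * t ^ ζ * |s - s'| ^ δ)
    (T t : ℝ) (hT : 0 < T) (ht : 0 < t)
    (h : ℕ → ℝ) (hbdd : ∃ C : ℝ, ∀ n, |h n| ≤ C)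
    (Tn : ℕ → ℝ) (hTn : ∀ n, Tn n = T + h n * (n : ℝ) ^ (-(3 / 2) : ℝ)) :
    Tendsto
      (fun n : ℕ => (n : ℝ)⁻¹ * ∫ s in (0:ℝ)..(t * n), ‖f (s / Tn n) - f (s / T)‖ ^ 2)
      atTop (nhds 0) := by
  obtain ⟨C, hC⟩ := hbdd
  set ε : ℕ → ℝ := fun n => C * (n : ℝ) ^ (-(3 / 2) : ℝ)
  have hTn_close (n : ℕ) : |Tn n - T| ≤ ε n := by
    rw [hTn, add_sub_cancel_left, abs_mul, abs_of_nonneg (rpow_nonneg n.cast_nonneg _)]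
    exact mul_le_mul_of_nonneg_right (hC n) (rpow_nonneg n.cast_nonneg _)
  have hε_small : ∀ᶠ n in atTop, ε n ≤ T / 2 := by
    have hε_lim : Tendsto ε atTop (𝓝 0) := by
      simpa using ((tendsto_rpow_neg_atTop (by norm_num)).comp
        tendsto_natCast_atTop_atTop).const_mul C
    exact hε_lim.eventually_le_const (by positivity)
  have hbound : Tendsto (fun n : ℕ =>
      t * (c * (2 * (t * n) / T) ^ ζ * (2 * (t * n) * ε n / T ^ 2) ^ δ) ^ 2) atTop (𝓝 0) := by
    have hC0 : 0 ≤ C := (abs_nonneg _).trans (hC 0)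
    have hrate := (tendsto_mul_rpow_mul_mul_rpow_neg_three_halves_atTop (2 * t / T)
      (2 * t * C / T ^ 2) c ζ δ (by positivity) (by positivity) hζ.2).comp
      tendsto_natCast_atTop_atTop
    have := (hrate.pow 2).const_mul t
    rw [zero_pow two_ne_zero, mul_zero] at this
    refine this.congr fun n => ?_
    simp only [Function.comp_apply, ε]
    ring_nf
  refine squeeze_zero' (Eventually.of_forall fun n => ?_) ?_ hbound
  · exact mul_nonneg (by positivity)
      (intervalIntegral.integral_nonneg (by positivity) fun _ _ => by positivity)
  · filter_upwards [hε_small, eventually_gt_atTop 0] with n hεn hn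
    exact inv_mul_integral_sq_norm_comp_div_sub_le hc hδ.1.le hf hT (hTn_close n) hεn ht
      (Nat.cast_pos.2 hn)
end
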